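/- arXiv:1312.1136 — 2 statements merged into one kernel-verified Lean document; each statement's English description precedes it below -/
import Mathlib

section
/- Every sequent derivable in the multi-succedent intuitionistic sequent calculus LJpm is intuitionistically valid: for every Kripke model ⟨W,⪯,V⟩ and σ ∈ W, if σ forces every formula in Γ then σ forces some formula in Δ. -/
/-- Propositional formulas: atoms, ⊥, ∨, ∧, ⊃. -/
inductive PFormula : Type
  | atom : ℕ → PFormula
  | bot  : PFormula
  | disj : PFormula → PFormula → PFormula
  | conj : PFormula → PFormula → PFormula
  | impl : PFormula → PFormula → PFormula
  deriving DecidableEq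

/-- A Kripke model for intuitionistic propositional logic:
a quasi-ordered nonempty set of worlds with a monotone valuation. -/
structure KripkeModel where
  W : Type
  ne : Nonempty W
  le : W → W → Prop
  le_refl : ∀ w, le w w
  le_trans : ∀ {a b c}, le a b → le b c → le a c
  V : W → Set ℕ
  V_mono : ∀ {a b}, le a b → V a ⊆ V b

/-- Kripke forcing. -/
def KripkeModel.force (M : KripkeModel) : M.W → PFormula → Prop
  | w, .atom p => p ∈ M.V w
  | _, .bot => False
  | w, .disj a b => M.force w a ∨ M.force w b
  | w, .conj a b => M.force w a ∧ M.force w b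
  | w, .impl a b => ∀ v, M.le w v → M.force v a → M.force v b

/-- The multi-succedent sequent calculus LJpm for intuitionistic propositional
logic (sequents are pairs of finite sets of formulas; weakening is built into
the set formulation of axioms and rules). -/
inductive LJpm : Finset PFormula → Finset PFormula → Prop
  | axAtom {Γ Δ : Finset PFormula} {p : ℕ} :
      PFormula.atom p ∈ Γ → PFormula.atom p ∈ Δ → LJpm Γ Δ
  | axBot {Γ Δ : Finset PFormula} : PFormula.bot ∈ Γ → LJpm Γ Δ
  | disjL {Γ Δ : Finset PFormula} {a b : PFormula} : a.disj b ∈ Γ →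
      LJpm (insert a Γ) Δ → LJpm (insert b Γ) Δ → LJpm Γ Δ
  | disjR {Γ Δ : Finset PFormula} {a b : PFormula} : a.disj b ∈ Δ →
      LJpm Γ (insert a (insert b Δ)) → LJpm Γ Δ
  | conjL {Γ Δ : Finset PFormula} {a b : PFormula} : a.conj b ∈ Γ →
      LJpm (insert a (insert b Γ)) Δ → LJpm Γ Δ
  | conjR {Γ Δ : Finset PFormula} {a b : PFormula} : a.conj b ∈ Δ →
      LJpm Γ (insert a Δ) → LJpm Γ (insert b Δ) → LJpm Γ Δ
  | implL {Γ Δ : Finset PFormula} {a b : PFormula} : a.impl b ∈ Γ →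
      LJpm Γ (insert a Δ) → LJpm (insert b Γ) Δ → LJpm Γ Δ
  | implR {Γ Δ : Finset PFormula} {a b : PFormula} : a.impl b ∈ Δ →
      LJpm (insert a Γ) {b} → LJpm Γ Δ

/-- Intuitionistic validity of a sequent Γ ⇒ Δ. -/
def Valid (Γ Δ : Finset PFormula) : Prop :=
  ∀ (M : KripkeModel) (w : M.W),
    (∀ γ ∈ Γ, M.force w γ) → ∃ δ ∈ Δ, M.force w δ

theorem KripkeModel.force_mono (M : KripkeModel) {w v : M.W} (hwv : M.le w v) :
    ∀ {φ : PFormula}, M.force w φ → M.force v φ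
  | .atom _, h => M.V_mono hwv h
  | .bot, h => h
  | .disj _ _, h => h.imp (M.force_mono hwv) (M.force_mono hwv)
  | .conj _ _, h => ⟨M.force_mono hwv h.1, M.force_mono hwv h.2⟩
  | .impl _ _, h => fun u hvu => h u (M.le_trans hwv hvu)

namespace Valid

variable {Γ Δ : Finset PFormula} {a b : PFormula}

theorem of_mem_of_mem {φ : PFormula} (hΓ : φ ∈ Γ) (hΔ : φ ∈ Δ) : Valid Γ Δ :=
  fun _ _ hw => ⟨φ, hΔ, hw φ hΓ⟩

theorem of_bot_mem (h : PFormula.bot ∈ Γ) : Valid Γ Δ :=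
  fun _ _ hw => (hw _ h).elim

theorem disjL (hm : a.disj b ∈ Γ) (ha : Valid (insert a Γ) Δ) (hb : Valid (insert b Γ) Δ) :
    Valid Γ Δ := by
  intro M w hw
  rcases hw _ hm with hwa | hwb
  · exact ha M w ((Finset.forall_mem_insert ..).2 ⟨hwa, hw⟩)
  · exact hb M w ((Finset.forall_mem_insert ..).2 ⟨hwb, hw⟩)

theorem disjR (hm : a.disj b ∈ Δ) (h : Valid Γ (insert a (insert b Δ))) : Valid Γ Δ := by
  intro M w hw
  obtain hwa | hwb | hΔ := by simpa only [Finset.exists_mem_insert] using h M w hw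
  exacts [⟨_, hm, .inl hwa⟩, ⟨_, hm, .inr hwb⟩, hΔ]

theorem conjL (hm : a.conj b ∈ Γ) (h : Valid (insert a (insert b Γ)) Δ) : Valid Γ Δ := by
  intro M w hw
  obtain ⟨hwa, hwb⟩ := hw _ hm
  exact h M w (by simp only [Finset.forall_mem_insert]; exact ⟨hwa, hwb, hw⟩)

theorem conjR (hm : a.conj b ∈ Δ) (ha : Valid Γ (insert a Δ)) (hb : Valid Γ (insert b Δ)) :
    Valid Γ Δ := by
  intro M w hw
  obtain hwa | hΔ := (Finset.exists_mem_insert ..).1 (ha M w hw)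
  · obtain hwb | hΔ := (Finset.exists_mem_insert ..).1 (hb M w hw)
    exacts [⟨_, hm, hwa, hwb⟩, hΔ]
  · exact hΔ

theorem implL (hm : a.impl b ∈ Γ) (ha : Valid Γ (insert a Δ)) (hb : Valid (insert b Γ) Δ) :
    Valid Γ Δ := by
  intro M w hw
  obtain hwa | hΔ := (Finset.exists_mem_insert ..).1 (ha M w hw)
  · exact hb M w ((Finset.forall_mem_insert ..).2 ⟨hw _ hm w (M.le_refl w) hwa, hw⟩)
  · exact hΔ

/-- The premise is used at an arbitrary later world, where `Γ` is still forced by monotonicity;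
this is why the rule may keep nothing but `b` on the right. -/
theorem implR (hm : a.impl b ∈ Δ) (h : Valid (insert a Γ) {b}) : Valid Γ Δ := by
  intro M w hw
  refine ⟨_, hm, fun v hwv hva => ?_⟩
  have hvΓ : ∀ γ ∈ insert a Γ, M.force v γ :=
    (Finset.forall_mem_insert ..).2 ⟨hva, fun γ hγ => M.force_mono hwv (hw γ hγ)⟩
  simpa only [Finset.mem_singleton, exists_eq_left] using h M v hvΓ

end Valid

/-- soundness of LJpm for Kripke semantics. -/
theorem LJpm_sound {Γ Δ : Finset PFormula} (h : LJpm Γ Δ) : Valid Γ Δ := by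
  induction h with
  | axAtom hΓ hΔ => exact .of_mem_of_mem hΓ hΔ
  | axBot hΓ => exact .of_bot_mem hΓ
  | disjL hm _ _ iha ihb => exact .disjL hm iha ihb
  | disjR hm _ ih => exact .disjR hm ih
  | conjL hm _ ih => exact .conjL hm ih
  | conjR hm _ _ iha ihb => exact .conjR hm iha ihb
  | implL hm _ _ iha ihb => exact .implL hm iha ihb
  | implR hm _ ih => exact .implR hm ih
end

section
/- The intuitionistic propositional sequent calculus LJpm is complete: every intuitionistically valid sequent Γ ⇒ Δ (valid in all Kripke models) is derivable in LJpm without cut. -/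
/-! A sequent that LJpm does not derive can be grown, inside the finite set of subformulas of
its formulas, to a maximal underivable one. Maximality makes it saturated: for every rule other
than (⇒⊃) of which it is the conclusion, it already contains the formulas of some underivable
premise. Saturated underivable sequents, ordered by inclusion of antecedents, form a Kripke model
in which every world forces its antecedent and refutes its succedent. The rule (⇒⊃) drops the
rest of the succedent, which is what lets a refuted implication `a ⊃ b` be witnessed by a
saturated extension of `a, Γ ⇒ b` above the world. -/

namespace PFormula

open Finset

def subformulas : PFormula → Finset PFormula
  | atom p => {atom p}
  | bot => {bot}
  | disj a b => insert (disj a b) (a.subformulas ∪ b.subformulas)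
  | conj a b => insert (conj a b) (a.subformulas ∪ b.subformulas)
  | impl a b => insert (impl a b) (a.subformulas ∪ b.subformulas)

theorem mem_subformulas_self (a : PFormula) : a ∈ a.subformulas := by
  cases a <;> simp [subformulas]

theorem subformulas_subset_of_mem {a b : PFormula} (h : b ∈ a.subformulas) :
    b.subformulas ⊆ a.subformulas := by
  induction a with
  | atom p => simp_all [subformulas]
  | bot => simp_all [subformulas]
  | disj a₁ a₂ ih₁ ih₂ | conj a₁ a₂ ih₁ ih₂ | impl a₁ a₂ ih₁ ih₂ =>
    simp only [subformulas, mem_insert, mem_union] at h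
    rcases h with rfl | h | h
    · rfl
    · exact (ih₁ h).trans (subset_union_left.trans (subset_insert _ _))
    · exact (ih₂ h).trans (subset_union_right.trans (subset_insert _ _))

end PFormula

open PFormula Finset

def SubformulaClosed (U : Finset PFormula) : Prop :=
  ∀ a ∈ U, a.subformulas ⊆ U

theorem subformulaClosed_biUnion_subformulas (S : Finset PFormula) :
    SubformulaClosed (S.biUnion subformulas) := by
  intro a ha b hb
  obtain ⟨c, hc, hac⟩ := mem_biUnion.1 ha
  exact mem_biUnion.2 ⟨c, hc, subformulas_subset_of_mem hac hb⟩

theorem subset_biUnion_subformulas (S : Finset PFormula) : S ⊆ S.biUnion subformulas :=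
  fun a ha => mem_biUnion.2 ⟨a, ha, mem_subformulas_self a⟩

namespace SubformulaClosed

variable {U : Finset PFormula} (hU : SubformulaClosed U) {a b : PFormula}
include hU

theorem mem_of_disj_mem (h : disj a b ∈ U) : a ∈ U ∧ b ∈ U :=
  ⟨hU _ h (by simp [subformulas, mem_subformulas_self]),
    hU _ h (by simp [subformulas, mem_subformulas_self])⟩

theorem mem_of_conj_mem (h : conj a b ∈ U) : a ∈ U ∧ b ∈ U :=
  ⟨hU _ h (by simp [subformulas, mem_subformulas_self]),
    hU _ h (by simp [subformulas, mem_subformulas_self])⟩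

theorem mem_of_impl_mem (h : impl a b ∈ U) : a ∈ U ∧ b ∈ U :=
  ⟨hU _ h (by simp [subformulas, mem_subformulas_self]),
    hU _ h (by simp [subformulas, mem_subformulas_self])⟩

end SubformulaClosed

structure Saturated (Γ Δ : Finset PFormula) : Prop where
  disj_left {a b : PFormula} : disj a b ∈ Γ → a ∈ Γ ∨ b ∈ Γ
  disj_right {a b : PFormula} : disj a b ∈ Δ → a ∈ Δ ∧ b ∈ Δ
  conj_left {a b : PFormula} : conj a b ∈ Γ → a ∈ Γ ∧ b ∈ Γ
  conj_right {a b : PFormula} : conj a b ∈ Δ → a ∈ Δ ∨ b ∈ Δ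
  impl_left {a b : PFormula} : impl a b ∈ Γ → a ∈ Δ ∨ b ∈ Γ

def UnderivableIn (U : Finset PFormula) (s : Finset PFormula × Finset PFormula) : Prop :=
  s.1 ⊆ U ∧ s.2 ⊆ U ∧ ¬ LJpm s.1 s.2

section Maximal

variable {U Γ Δ : Finset PFormula} (hmax : Maximal (UnderivableIn U) (Γ, Δ))
include hmax

theorem subset_left_of_maximal {Γ' : Finset PFormula} (hΓ' : Γ ⊆ Γ') (hU : Γ' ⊆ U)
    (h : ¬ LJpm Γ' Δ) : Γ' ⊆ Γ :=
  (hmax.2 (y := (Γ', Δ)) ⟨hU, hmax.1.2.1, h⟩ ⟨hΓ', subset_rfl⟩).1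

theorem subset_right_of_maximal {Δ' : Finset PFormula} (hΔ' : Δ ⊆ Δ') (hU : Δ' ⊆ U)
    (h : ¬ LJpm Γ Δ') : Δ' ⊆ Δ :=
  (hmax.2 (y := (Γ, Δ')) ⟨hmax.1.1, hU, h⟩ ⟨subset_rfl, hΔ'⟩).2

theorem mem_left_of_maximal {a : PFormula} (ha : a ∈ U) (h : ¬ LJpm (insert a Γ) Δ) : a ∈ Γ :=
  subset_left_of_maximal hmax (subset_insert _ _) (insert_subset ha hmax.1.1) h
    (mem_insert_self _ _)

theorem mem_right_of_maximal {a : PFormula} (ha : a ∈ U) (h : ¬ LJpm Γ (insert a Δ)) : a ∈ Δ :=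
  subset_right_of_maximal hmax (subset_insert _ _) (insert_subset ha hmax.1.2.1) h
    (mem_insert_self _ _)

theorem saturated_of_maximal (hU : SubformulaClosed U) : Saturated Γ Δ := by
  obtain ⟨hΓU, hΔU, hΓΔ⟩ := hmax.1
  refine ⟨fun h => ?_, fun h => ?_, fun h => ?_, fun h => ?_, fun h => ?_⟩
  · obtain ⟨ha, hb⟩ := hU.mem_of_disj_mem (hΓU h)
    exact (not_and_or.1 fun ⟨d₁, d₂⟩ => hΓΔ (.disjL h d₁ d₂)).imp
      (mem_left_of_maximal hmax ha) (mem_left_of_maximal hmax hb)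
  · obtain ⟨ha, hb⟩ := hU.mem_of_disj_mem (hΔU h)
    have := subset_right_of_maximal hmax ((subset_insert _ _).trans (subset_insert _ _))
      (insert_subset ha (insert_subset hb hΔU)) fun d => hΓΔ (.disjR h d)
    exact ⟨this (mem_insert_self _ _), this (mem_insert_of_mem (mem_insert_self _ _))⟩
  · obtain ⟨ha, hb⟩ := hU.mem_of_conj_mem (hΓU h)
    have := subset_left_of_maximal hmax ((subset_insert _ _).trans (subset_insert _ _))
      (insert_subset ha (insert_subset hb hΓU)) fun d => hΓΔ (.conjL h d)
    exact ⟨this (mem_insert_self _ _), this (mem_insert_of_mem (mem_insert_self _ _))⟩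
  · obtain ⟨ha, hb⟩ := hU.mem_of_conj_mem (hΔU h)
    exact (not_and_or.1 fun ⟨d₁, d₂⟩ => hΓΔ (.conjR h d₁ d₂)).imp
      (mem_right_of_maximal hmax ha) (mem_right_of_maximal hmax hb)
  · obtain ⟨ha, hb⟩ := hU.mem_of_impl_mem (hΓU h)
    exact (not_and_or.1 fun ⟨d₁, d₂⟩ => hΓΔ (.implL h d₁ d₂)).imp
      (mem_right_of_maximal hmax ha) (mem_left_of_maximal hmax hb)

end Maximal

structure SaturatedSequent where
  Γ : Finset PFormula
  Δ : Finset PFormula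
  not_derivable : ¬ LJpm Γ Δ
  saturated : Saturated Γ Δ

theorem exists_saturatedSequent_of_not_derivable {Γ Δ : Finset PFormula} (h : ¬ LJpm Γ Δ) :
    ∃ s : SaturatedSequent, Γ ⊆ s.Γ ∧ Δ ⊆ s.Δ := by
  set U := (Γ ∪ Δ).biUnion subformulas
  have hΓ : Γ ⊆ U := subset_union_left.trans (subset_biUnion_subformulas _)
  have hΔ : Δ ⊆ U := subset_union_right.trans (subset_biUnion_subformulas _)
  have hfin : {s | UnderivableIn U s}.Finite :=
    (U.powerset ×ˢ U.powerset).finite_toSet.subset fun s hs => by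
      simpa using And.intro hs.1 hs.2.1
  obtain ⟨⟨Γ', Δ'⟩, ⟨hΓΓ', hΔΔ'⟩, hmax⟩ := hfin.exists_le_maximal (a := (Γ, Δ)) ⟨hΓ, hΔ, h⟩
  exact ⟨⟨Γ', Δ', hmax.1.2.2,
    saturated_of_maximal hmax (subformulaClosed_biUnion_subformulas _)⟩, hΓΓ', hΔΔ'⟩

def canonicalModel (s₀ : SaturatedSequent) : KripkeModel where
  W := SaturatedSequent
  ne := ⟨s₀⟩
  le s t := s.Γ ⊆ t.Γ
  le_refl _ := subset_rfl
  le_trans h₁ h₂ := h₁.trans h₂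
  V s := {p | atom p ∈ s.Γ}
  V_mono h _ hp := h hp

theorem canonicalModel_force (s₀ : SaturatedSequent) (a : PFormula) (t : SaturatedSequent) :
    (a ∈ t.Γ → (canonicalModel s₀).force t a) ∧ (a ∈ t.Δ → ¬ (canonicalModel s₀).force t a) := by
  induction a generalizing t with
  | atom p => exact ⟨id, fun h hp => t.not_derivable (.axAtom hp h)⟩
  | bot => exact ⟨fun h => (t.not_derivable (.axBot h)).elim, fun _ => id⟩
  | disj a b iha ihb =>
    exact ⟨fun h => (t.saturated.disj_left h).imp (iha t).1 (ihb t).1, fun h hab =>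
      hab.elim ((iha t).2 (t.saturated.disj_right h).1) ((ihb t).2 (t.saturated.disj_right h).2)⟩
  | conj a b iha ihb =>
    exact ⟨fun h => ⟨(iha t).1 (t.saturated.conj_left h).1, (ihb t).1 (t.saturated.conj_left h).2⟩,
      fun h hab => (t.saturated.conj_right h).elim (fun ha => (iha t).2 ha hab.1)
        fun hb => (ihb t).2 hb hab.2⟩
  | impl a b iha ihb =>
    refine ⟨fun h v htv hva => ?_, fun h hab => ?_⟩
    · exact (v.saturated.impl_left (htv h)).elim (fun ha => ((iha v).2 ha hva).elim) (ihb v).1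
    · obtain ⟨v, hΓv, hbv⟩ :=
        exists_saturatedSequent_of_not_derivable fun d => t.not_derivable (.implR h d)
      exact (ihb v).2 (hbv (mem_singleton_self b))
        (hab v ((subset_insert a t.Γ).trans hΓv) ((iha v).1 (hΓv (mem_insert_self a t.Γ))))

/-- completeness of cut-free LJpm for Kripke semantics. -/
theorem LJpm_complete {Γ Δ : Finset PFormula} (h : Valid Γ Δ) : LJpm Γ Δ := by
  by_contra hΓΔ
  obtain ⟨s, hΓ, hΔ⟩ := exists_saturatedSequent_of_not_derivable hΓΔ
  obtain ⟨δ, hδ, hsδ⟩ :=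
    h (canonicalModel s) s fun γ hγ => (canonicalModel_force s γ s).1 (hΓ hγ)
  exact (canonicalModel_force s δ s).2 (hΔ hδ) hsδ
end
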